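/- arXiv:2508.10221 — 9 statements merged into one kernel-verified Lean document; each statement's English description precedes it below -/
import Mathlib

section
/- Let X be an infinite set of cardinality κ. Then every non-trivial cutset in 𝒫(X) contains an antichain (under inclusion) of cardinality 2^κ. -/
/-!
Given `R ⊆ X` with `|R| = |Rᶜ| = κ`, well-order `R` and `Rᶜ` in order type `κ` and take the chain
made of the final segments of `R`, then `R`, then the sets `R ∪ I` for `I` an initial segment of
`Rᶜ`. A maximal chain extending it meets the cutset in some `E ≠ ∅, X` comparable with all these
sets, and since initial segments have size `< κ` this forces `|E \ R|, |R \ E| < κ`.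

Writing `X ≃ X × (X × Bool)`, the preimages `R_φ` of the graphs of the `2^κ` maps `φ : X → Bool`
satisfy `|R_φ \ R_ψ| = κ` whenever `φ ≠ ψ`, so the sets `E_φ` chosen near them form an antichain.
-/

open Cardinal Set

universe u

theorem IsChain.insert_union_of_le_of_le {α : Type*} [Preorder α] {s t : Set α} {a : α}
    (hs : IsChain (· ≤ ·) s) (ht : IsChain (· ≤ ·) t) (hsa : ∀ b ∈ s, b ≤ a)
    (hat : ∀ c ∈ t, a ≤ c) : IsChain (· ≤ ·) (insert a (s ∪ t)) := by
  refine (isChain_union.2 ⟨hs, ht, fun b hb c hc _ => .inl ((hsa b hb).trans (hat c hc))⟩).insert ?_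
  rintro b (hb | hb) -
  · exact .inr (hsa b hb)
  · exact .inl (hat b hb)

theorem exists_isChain_mk_compl_lt (α : Type u) (hα : ℵ₀ ≤ #α) :
    ∃ 𝒟 : Set (Set α), IsChain (· ⊆ ·) 𝒟 ∧ (∀ D ∈ 𝒟, #↥Dᶜ < #α) ∧ ∀ x, ∃ D ∈ 𝒟, x ∉ D := by
  obtain ⟨e⟩ : Nonempty (α ≃ (#α).ord.ToType) := Cardinal.eq.1 (mk_ord_toType _).symm
  have := Cardinal.noMaxOrder hα
  have hanti : Antitone fun a => e ⁻¹' Ici a := fun a b hab => preimage_mono (Ici_subset_Ici.2 hab)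
  refine ⟨range fun a => e ⁻¹' Ici a, hanti.isChain_range, ?_, fun x => ?_⟩
  · rintro _ ⟨a, rfl⟩
    rw [← preimage_compl, compl_Ici, mk_preimage_equiv]
    simpa using mk_Iio_lt a (by simp)
  · obtain ⟨b, hb⟩ := exists_gt (e x)
    exact ⟨_, mem_range_self b, hb.not_ge⟩

section

variable {X : Type u}

def IsCutset (C : Set (Set X)) : Prop :=
  ∀ M : Set (Set X), IsMaxChain (· ⊆ ·) M → (C ∩ M).Nonempty

theorem exists_isChain_subset_mk_sdiff_lt (R : Set X) (hR : ℵ₀ ≤ #R) :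
    ∃ 𝒟 : Set (Set X), IsChain (· ⊆ ·) 𝒟 ∧ (∀ D ∈ 𝒟, D ⊆ R) ∧ (∀ D ∈ 𝒟, #↥(R \ D) < #R) ∧
      ∀ x ∈ R, ∃ D ∈ 𝒟, x ∉ D := by
  obtain ⟨𝒟, h𝒟, hsmall, hcover⟩ := exists_isChain_mk_compl_lt R hR
  refine ⟨(Subtype.val '' ·) '' 𝒟, monotone_image.isChain_image h𝒟, ?_, ?_, ?_⟩
  · rintro _ ⟨D, -, rfl⟩
    exact Subtype.coe_image_subset R D
  · rintro _ ⟨D, hD, rfl⟩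
    rw [← image_val_compl, mk_image_eq Subtype.val_injective]
    exact hsmall D hD
  · intro x hx
    obtain ⟨D, hD, hxD⟩ := hcover ⟨x, hx⟩
    exact ⟨_, mem_image_of_mem _ hD, fun h => hxD (Subtype.val_injective.mem_set_image.1 h)⟩

theorem mk_sdiff_lt_of_forall_subset_or_subset {R E : Set X} {𝒟 : Set (Set X)} {κ : Cardinal}
    (hE : E.Nonempty) (hER : E ⊆ R) (hcover : ∀ x ∈ R, ∃ D ∈ 𝒟, x ∉ D)
    (hsmall : ∀ D ∈ 𝒟, #↥(R \ D) < κ) (hcomp : ∀ D ∈ 𝒟, E ⊆ D ∨ D ⊆ E) :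
    #↥(R \ E) < κ := by
  obtain ⟨x, hx⟩ := hE
  obtain ⟨D, hD, hxD⟩ := hcover x (hER hx)
  rcases hcomp D hD with hED | hDE
  · exact absurd (hED hx) hxD
  · exact (mk_le_mk_of_subset (sdiff_subset_sdiff_right hDE)).trans_lt (hsmall D hD)

theorem IsCutset.exists_mem_mk_sdiff_lt {C : Set (Set X)} (hC : IsCutset C)
    (huniv : Set.univ ∉ C) (hempty : ∅ ∉ C) {R : Set X} (hR : ℵ₀ ≤ #R) (hRc : ℵ₀ ≤ #↥Rᶜ) :
    ∃ E ∈ C, #↥(E \ R) < #↥Rᶜ ∧ #↥(R \ E) < #R := by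
  obtain ⟨𝒟, h𝒟, hsub, hsmall, hcover⟩ := exists_isChain_subset_mk_sdiff_lt R hR
  obtain ⟨𝒟', h𝒟', hsub', hsmall', hcover'⟩ := exists_isChain_subset_mk_sdiff_lt Rᶜ hRc
  have h𝒰 : IsChain (· ⊆ ·) (compl '' 𝒟') := by
    rintro _ ⟨A, hA, rfl⟩ _ ⟨B, hB, rfl⟩ hne
    exact (h𝒟' hA hB (ne_of_apply_ne _ hne)).symm.imp compl_subset_compl.2 compl_subset_compl.2
  have hchain : IsChain (· ⊆ ·) (insert R (𝒟 ∪ compl '' 𝒟')) :=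
    h𝒟.insert_union_of_le_of_le h𝒰 hsub (by
      rintro _ ⟨D, hD, rfl⟩
      exact subset_compl_comm.1 (hsub' D hD))
  obtain ⟨M, hM, hM0⟩ := hchain.exists_maxChain
  obtain ⟨E, hEC, hEM⟩ := hC M hM
  have hcomp : ∀ S ∈ insert R (𝒟 ∪ compl '' 𝒟'), E ⊆ S ∨ S ⊆ E := fun S hS =>
    hM.isChain.total hEM (hM0 hS)
  have hE : E.Nonempty := nonempty_iff_ne_empty.2 (ne_of_mem_of_not_mem hEC hempty)
  have hEc : Eᶜ.Nonempty := nonempty_compl.2 (ne_of_mem_of_not_mem hEC huniv)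
  have hempty_lt : ∀ {S : Set X}, ℵ₀ ≤ #S → #↥(∅ : Set X) < #S := fun h => by
    simpa using aleph0_pos.trans_le h
  refine ⟨E, hEC, ?_⟩
  rcases hcomp R (mem_insert _ _) with hER | hRE
  · rw [sdiff_eq_empty.2 hER]
    exact ⟨hempty_lt hRc, mk_sdiff_lt_of_forall_subset_or_subset hE hER hcover hsmall
      fun D hD => hcomp D (.inr (.inl hD))⟩
  · rw [sdiff_eq_empty.2 hRE, ← compl_sdiff_compl]
    refine ⟨mk_sdiff_lt_of_forall_subset_or_subset hEc (compl_subset_compl.2 hRE) hcover' hsmall'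
      fun D hD => ?_, hempty_lt hR⟩
    exact (hcomp Dᶜ (.inr (.inr (mem_image_of_mem _ hD)))).symm.imp
      compl_subset_comm.1 subset_compl_comm.1

theorem not_subset_of_mk_sdiff_lt {R R' E E' : Set X} {κ : Cardinal} (hκ : ℵ₀ ≤ κ)
    (hE : #↥(R \ E) < κ) (hE' : #↥(E' \ R') < κ) (hRR' : κ ≤ #↥(R \ R')) : ¬E ⊆ E' := by
  intro h
  have hcover : R \ R' ⊆ (R \ E) ∪ (E' \ R') := fun x hx =>
    (em (x ∈ E)).elim (fun hxE => .inr ⟨h hxE, hx.2⟩) fun hxE => .inl ⟨hx.1, hxE⟩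
  exact (hRR'.trans ((mk_le_mk_of_subset hcover).trans (mk_union_le _ _))).not_gt
    (add_lt_of_lt hκ hE hE')

theorem exists_le_mk_fiber (hX : ℵ₀ ≤ #X) (Y : Type u) [Nonempty Y] (hY : #Y ≤ #X) :
    ∃ π : X → Y, ∀ y, #X ≤ #↥(π ⁻¹' {y}) := by
  obtain ⟨e⟩ : Nonempty (X ≃ X × Y) := Cardinal.eq.1 (by
    rw [mk_prod, lift_id, lift_id, mul_eq_left hX hY (mk_ne_zero Y)])
  refine ⟨fun x => (e x).2, fun y => mk_le_of_injective (f := fun x => ⟨e.symm (x, y), ?_⟩) ?_⟩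
  · simp
  · intro x x' h
    simpa using h

theorem le_mk_preimage_of_le_mk_fiber {Y : Type*} {π : X → Y} {κ : Cardinal}
    (hπ : ∀ y, κ ≤ #↥(π ⁻¹' {y})) {A : Set Y} (hA : A.Nonempty) : κ ≤ #↥(π ⁻¹' A) :=
  (hπ hA.some).trans (mk_le_mk_of_subset (preimage_mono (singleton_subset_iff.2 hA.some_mem)))

theorem exists_family_le_mk_sdiff_of_ne (hX : ℵ₀ ≤ #X) :
    ∃ R : (X → Bool) → Set X, (∀ φ, #X ≤ #↥(R φ)) ∧ (∀ φ, #X ≤ #↥(R φ)ᶜ) ∧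
      ∀ φ ψ, φ ≠ ψ → #X ≤ #↥(R φ \ R ψ) := by
  have hXne : Nonempty X := mk_ne_zero_iff.1 (aleph0_pos.trans_le hX).ne'
  obtain ⟨x₀⟩ := id hXne
  obtain ⟨π, hπ⟩ := exists_le_mk_fiber hX (X × Bool) (by
    simpa using (mul_eq_left hX (ofNat_le_aleph0.trans hX) two_ne_zero).le)
  refine ⟨fun φ => π ⁻¹' φ.graph, fun φ => le_mk_preimage_of_le_mk_fiber hπ ⟨(x₀, φ x₀), rfl⟩,
    fun φ => le_mk_preimage_of_le_mk_fiber hπ (A := φ.graphᶜ) ⟨(x₀, !φ x₀), by simp⟩,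
    fun φ ψ hne => ?_⟩
  obtain ⟨x, hx⟩ := Function.ne_iff.1 hne
  exact le_mk_preimage_of_le_mk_fiber hπ (A := φ.graph \ ψ.graph) ⟨(x, φ x), rfl, hx.symm⟩

end

/-- Let X be an infinite set of cardinality κ. Then every non-trivial
cutset in 𝒫(X) contains an antichain (under inclusion) of cardinality 2^κ. -/
theorem cutset_contains_antichain_of_card_two_pow {X : Type u} (κ : Cardinal.{u})
    (hX : Cardinal.mk X = κ) (hκ : Cardinal.aleph0 ≤ κ)
    (C : Set (Set X))
    (hcut : ∀ M : Set (Set X), IsMaxChain (· ⊆ ·) M → (C ∩ M).Nonempty)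
    (huniv : Set.univ ∉ C) (hempty : ∅ ∉ C) :
    ∃ ℬ ⊆ C, IsAntichain (· ⊆ ·) ℬ ∧ Cardinal.mk ℬ = 2 ^ κ := by
  subst hX
  obtain ⟨R, hR, hRc, hRR⟩ := exists_family_le_mk_sdiff_of_ne hκ
  have hC : IsCutset C := hcut
  choose E hEC hE using fun φ =>
    hC.exists_mem_mk_sdiff_lt huniv hempty (hκ.trans (hR φ)) (hκ.trans (hRc φ))
  have hE_inj : ∀ φ ψ, E φ ⊆ E ψ → φ = ψ := fun φ ψ h => by_contra fun hne =>
    not_subset_of_mk_sdiff_lt hκ ((hE φ).2.trans_le (mk_set_le _))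
      ((hE ψ).1.trans_le (mk_set_le _)) (hRR φ ψ hne) h
  refine ⟨range E, range_subset_iff.2 hEC, ?_, ?_⟩
  · rintro _ ⟨φ, rfl⟩ _ ⟨ψ, rfl⟩ hne h
    exact hne (congrArg E (hE_inj φ ψ h))
  · rw [mk_range_eq E fun φ ψ h => hE_inj φ ψ h.le]
    simp
end

section
/- Let κ be an infinite cardinal and let A be a subset of κ. Then the collection 𝒞_A = {∅, κ} ∪ {A − α : α < κ} ∪ {A ∪ α : α < κ} is a maximal chain in 𝒫(κ) containing A. -/
/-!
Every set in the chain is comparable with `A`, so a set `S` comparable with the whole chain lies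
below or above `A`. If `∅ ≠ S ⊆ A`, let `a` be the least element of `S`; for `x ∈ A` with
`a < x`, the set `A − x` misses `a ∈ S`, so comparability forces `A − x ⊆ S`, whence `S = A − a`.
Dually, if `A ⊆ S ≠ κ`, let `a` be the least element outside `S`; for `x ∈ S − A` with `a < x`,
the set `A ∪ x` contains `a ∉ S`, so `S ⊆ A ∪ x`, which is absurd as `x ∉ A ∪ x`; whence
`S = A ∪ a`.
-/

/-- The collection 𝒞_A = {∅, κ} ∪ {A − α : α < κ} ∪ {A ∪ α : α < κ}, where the
infinite cardinal κ is identified with the set of ordinals below it,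
A − α = A \ {β : β < α} and A ∪ α = A ∪ {β : β < α}. -/
def cutsetChain (κ : Cardinal.{u}) (A : Set {β : Ordinal.{u} // β < κ.ord}) :
    Set (Set {β : Ordinal.{u} // β < κ.ord}) :=
  {∅, Set.univ} ∪
    {S | ∃ α < κ.ord, S = A \ {x | x.1 < α}} ∪
    {S | ∃ α < κ.ord, S = A ∪ {x | x.1 < α}}

open Set

section CutChain

variable {X : Type*} [LinearOrder X]

def cutChain (A : Set X) : Set (Set X) :=
  {∅, univ} ∪ range (fun a => A \ Iio a) ∪ range (fun a => A ∪ Iio a)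

theorem isChain_cutChain (A : Set X) : IsChain (· ⊆ ·) (cutChain A) := by
  rintro S (((rfl | rfl) | ⟨a, rfl⟩) | ⟨a, rfl⟩) T (((rfl | rfl) | ⟨b, rfl⟩) | ⟨b, rfl⟩) - <;>
    simp only [empty_subset, subset_univ, true_or, or_true]
  · exact (le_total b a).imp (fun h => sdiff_subset_sdiff_right (Iio_subset_Iio h))
      (fun h => sdiff_subset_sdiff_right (Iio_subset_Iio h))
  · exact Or.inl (sdiff_subset.trans subset_union_left)
  · exact Or.inr (sdiff_subset.trans subset_union_left)
  · exact (le_total a b).imp (fun h => union_subset_union_right _ (Iio_subset_Iio h))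
      (fun h => union_subset_union_right _ (Iio_subset_Iio h))

variable [WellFoundedLT X] {A S : Set X}

theorem mem_cutChain_of_subset (hSA : S ⊆ A)
    (hS : ∀ x, S ⊆ A \ Iio x ∨ A \ Iio x ⊆ S) : S ∈ cutChain A := by
  rcases S.eq_empty_or_nonempty with rfl | hne
  · exact Or.inl (Or.inl (Or.inl rfl))
  obtain ⟨a, haS, ha⟩ := WellFounded.has_min wellFounded_lt S hne
  refine Or.inl (Or.inr ⟨a, Subset.antisymm (fun x ⟨hxA, hxa⟩ => ?_)
    fun x hx => ⟨hSA hx, ha x hx⟩⟩)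
  rcases (not_lt.1 hxa).eq_or_lt with rfl | hax
  · exact haS
  · have hxS : A \ Iio x ⊆ S := (hS x).resolve_left fun h => (h haS).2 hax
    exact hxS ⟨hxA, lt_irrefl x⟩

theorem mem_cutChain_of_superset (hAS : A ⊆ S)
    (hS : ∀ x, S ⊆ A ∪ Iio x ∨ A ∪ Iio x ⊆ S) : S ∈ cutChain A := by
  rcases Sᶜ.eq_empty_or_nonempty with hS | hne
  · exact Or.inl (Or.inl (Or.inr (compl_empty_iff.1 hS)))
  obtain ⟨a, haS, ha⟩ := WellFounded.has_min wellFounded_lt Sᶜ hne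
  refine Or.inr ⟨a, Subset.antisymm (union_subset hAS fun x hxa => ?_) fun x hxS => ?_⟩
  · by_contra hxS
    exact ha x hxS hxa
  · by_contra hx
    obtain ⟨hxA, hxa⟩ := not_or.1 hx
    have hax : a < x := (not_lt.1 hxa).lt_of_ne fun h => haS (h ▸ hxS)
    have hSx : S ⊆ A ∪ Iio x := (hS x).resolve_right fun h => haS (h (Or.inr hax))
    exact (hSx hxS).elim hxA (lt_irrefl x)

theorem self_mem_cutChain (A : Set X) : A ∈ cutChain A :=
  mem_cutChain_of_subset subset_rfl fun _ => Or.inr sdiff_subset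

theorem mem_cutChain_of_forall_comparable (hS : ∀ T ∈ cutChain A, S ⊆ T ∨ T ⊆ S) :
    S ∈ cutChain A :=
  (hS A (self_mem_cutChain A)).elim
    (fun hSA => mem_cutChain_of_subset hSA fun x => hS _ (Or.inl (Or.inr ⟨x, rfl⟩)))
    (fun hAS => mem_cutChain_of_superset hAS fun x => hS _ (Or.inr ⟨x, rfl⟩))

theorem isMaxChain_cutChain (A : Set X) : IsMaxChain (· ⊆ ·) (cutChain A) := by
  refine ⟨isChain_cutChain A, fun t ht hsub => Subset.antisymm hsub fun S hS => ?_⟩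
  refine mem_cutChain_of_forall_comparable fun T hT => ?_
  rcases eq_or_ne S T with rfl | hne
  · exact Or.inl subset_rfl
  · exact ht hS (hsub hT) hne

end CutChain

theorem cutsetChain_eq_cutChain (κ : Cardinal.{u}) (A : Set {β : Ordinal.{u} // β < κ.ord}) :
    cutsetChain κ A = cutChain A := by
  ext S
  constructor
  · rintro ((h | ⟨α, hα, rfl⟩) | ⟨α, hα, rfl⟩)
    exacts [Or.inl (Or.inl h), Or.inl (Or.inr ⟨⟨α, hα⟩, rfl⟩), Or.inr ⟨⟨α, hα⟩, rfl⟩]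
  · rintro ((h | ⟨a, rfl⟩) | ⟨a, rfl⟩)
    exacts [Or.inl (Or.inl h), Or.inl (Or.inr ⟨a.1, a.2, rfl⟩), Or.inr ⟨a.1, a.2, rfl⟩]

theorem cutsetChain_isMaxChain_general (κ : Cardinal.{u})
    (A : Set {β : Ordinal.{u} // β < κ.ord}) :
    IsMaxChain (· ⊆ ·) (cutsetChain κ A) ∧ A ∈ cutsetChain κ A := by
  rw [cutsetChain_eq_cutChain]
  exact ⟨isMaxChain_cutChain A, self_mem_cutChain A⟩

/-- Let κ be an infinite cardinal and let A be a subset of κ. Then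
𝒞_A = {∅, κ} ∪ {A − α : α < κ} ∪ {A ∪ α : α < κ} is a maximal chain in 𝒫(κ)
containing A. -/
theorem cutsetChain_isMaxChain (κ : Cardinal.{u}) (hκ : Cardinal.aleph0 ≤ κ)
    (A : Set {β : Ordinal.{u} // β < κ.ord}) :
    IsMaxChain (· ⊆ ·) (cutsetChain κ A) ∧ A ∈ cutsetChain κ A :=
  cutsetChain_isMaxChain_general κ A
end

section
/- Let κ be an infinite cardinal and let 𝒞 be a non-trivial cutset in 𝒫(κ). Then for every subset A of κ, either there is an ordinal α < κ for which A − α ∈ 𝒞, or there is an ordinal α < κ for which A ∪ α ∈ 𝒞. -/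
/-!
The sets `A \ L` and `A ∪ L`, where `L` runs over the initial segments of `κ`, form a maximal
chain of `𝒫(κ)`: initial segments are linearly ordered, and a set comparable with every member
of the family is recovered as `A \ L` (or `A ∪ L`) for the initial segment `L` read off from it.
The cutset meets this chain in a set that is neither `∅ = A \ κ` nor `κ = A ∪ κ`, so its segment
is a proper initial segment `α < κ`.
-/

open Set

section LinearOrder

variable {ι : Type*} [LinearOrder ι]

def segmentChain (A : Set ι) : Set (Set ι) :=
  {S | ∃ L, IsLowerSet L ∧ (S = A \ L ∨ S = A ∪ L)}

theorem isChain_segmentChain (A : Set ι) : IsChain (· ⊆ ·) (segmentChain A) := by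
  rintro S ⟨L, hL, rfl | rfl⟩ T ⟨L', hL', rfl | rfl⟩ -
  · rcases hL.total hL' with h | h
    · exact Or.inr (sdiff_subset_sdiff_right h)
    · exact Or.inl (sdiff_subset_sdiff_right h)
  · exact Or.inl (sdiff_subset.trans subset_union_left)
  · exact Or.inr (sdiff_subset.trans subset_union_left)
  · rcases hL.total hL' with h | h
    · exact Or.inl (union_subset_union_right A h)
    · exact Or.inr (union_subset_union_right A h)

theorem exists_eq_diff_of_comparable {A B : Set ι} (hBA : B ⊆ A)
    (hcomp : ∀ S ∈ segmentChain A, B ⊆ S ∨ S ⊆ B) : ∃ L, IsLowerSet L ∧ B = A \ L := by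
  refine ⟨{x | ∀ y ∈ B, x < y}, fun a b hba ha y hy ↦ hba.trans_lt (ha y hy), ?_⟩
  refine Subset.antisymm (fun y hy ↦ ⟨hBA hy, fun h ↦ lt_irrefl y (h y hy)⟩) ?_
  rintro x ⟨hxA, hx⟩
  obtain ⟨y, hyB, hyx⟩ : ∃ y ∈ B, y ≤ x := by simpa using hx
  rcases hyx.eq_or_lt with rfl | hyx
  · exact hyB
  rcases hcomp (A \ Iic y) ⟨_, isLowerSet_Iic y, Or.inl rfl⟩ with h | h
  · exact absurd le_rfl (h hyB).2
  · exact h ⟨hxA, not_le.mpr hyx⟩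

theorem exists_eq_union_of_comparable {A B : Set ι} (hAB : A ⊆ B)
    (hcomp : ∀ S ∈ segmentChain A, B ⊆ S ∨ S ⊆ B) : ∃ L, IsLowerSet L ∧ B = A ∪ L := by
  refine ⟨{x | ∃ y ∈ B \ A, x ≤ y}, fun a b hba ⟨y, hy, hay⟩ ↦ ⟨y, hy, hba.trans hay⟩, ?_⟩
  refine Subset.antisymm (fun y hy ↦ or_iff_not_imp_left.mpr fun hyA ↦ ⟨y, ⟨hy, hyA⟩, le_rfl⟩) ?_
  rintro x (hxA | ⟨y, ⟨hyB, hyA⟩, hxy⟩)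
  · exact hAB hxA
  rcases hcomp (A ∪ Iic x) ⟨_, isLowerSet_Iic x, Or.inr rfl⟩ with h | h
  · rcases h hyB with hyA' | hyx
    · exact absurd hyA' hyA
    · exact le_antisymm hxy hyx ▸ hyB
  · exact h (Or.inr le_rfl)

theorem isMaxChain_segmentChain (A : Set ι) : IsMaxChain (· ⊆ ·) (segmentChain A) := by
  refine ⟨isChain_segmentChain A, fun T hT hsub ↦ Subset.antisymm hsub fun B hB ↦ ?_⟩
  have hcomp : ∀ S ∈ segmentChain A, B ⊆ S ∨ S ⊆ B := fun S hS ↦ hT.total hB (hsub hS)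
  have hA : A ∈ segmentChain A := ⟨∅, isLowerSet_empty, Or.inl sdiff_empty.symm⟩
  rcases hcomp A hA with hBA | hAB
  · obtain ⟨L, hL, rfl⟩ := exists_eq_diff_of_comparable hBA hcomp
    exact ⟨L, hL, Or.inl rfl⟩
  · obtain ⟨L, hL, rfl⟩ := exists_eq_union_of_comparable hAB hcomp
    exact ⟨L, hL, Or.inr rfl⟩

end LinearOrder

theorem cutset_mem_diff_or_union_general (κ : Cardinal.{u})
    (C : Set (Set {β : Ordinal.{u} // β < κ.ord}))
    (hcut : ∀ M : Set (Set {β : Ordinal.{u} // β < κ.ord}),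
      IsMaxChain (· ⊆ ·) M → (C ∩ M).Nonempty)
    (huniv : Set.univ ∉ C) (hempty : ∅ ∉ C)
    (A : Set {β : Ordinal.{u} // β < κ.ord}) :
    (∃ α < κ.ord, A \ {x | x.1 < α} ∈ C) ∨ (∃ α < κ.ord, A ∪ {x | x.1 < α} ∈ C) := by
  obtain ⟨S, hSC, L, hL, hS⟩ := hcut _ (isMaxChain_segmentChain A)
  rcases hL.eq_univ_or_Iio with rfl | ⟨a, rfl⟩
  · rcases hS with rfl | rfl
    · exact absurd (sdiff_univ A ▸ hSC) hempty
    · exact absurd (union_univ A ▸ hSC) huniv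
  · rcases hS with rfl | rfl
    · exact Or.inl ⟨a.1, a.2, hSC⟩
    · exact Or.inr ⟨a.1, a.2, hSC⟩

/-- Let κ be an infinite cardinal and let 𝒞 be a non-trivial cutset in
𝒫(κ) (κ identified with the set {β : Ordinal | β < κ}). Then for every subset A of κ,
either there is an ordinal α < κ with A − α ∈ 𝒞 or there is an ordinal α < κ with
A ∪ α ∈ 𝒞, where A − α = A \ {β : β < α} and A ∪ α = A ∪ {β : β < α}. -/
theorem cutset_mem_diff_or_union (κ : Cardinal.{u}) (hκ : Cardinal.aleph0 ≤ κ)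
    (C : Set (Set {β : Ordinal.{u} // β < κ.ord}))
    (hcut : ∀ M : Set (Set {β : Ordinal.{u} // β < κ.ord}),
      IsMaxChain (· ⊆ ·) M → (C ∩ M).Nonempty)
    (huniv : Set.univ ∉ C) (hempty : ∅ ∉ C)
    (A : Set {β : Ordinal.{u} // β < κ.ord}) :
    (∃ α < κ.ord, A \ {x | x.1 < α} ∈ C) ∨ (∃ α < κ.ord, A ∪ {x | x.1 < α} ∈ C) :=
  cutset_mem_diff_or_union_general κ C hcut huniv hempty A
end

section
/- Let κ be an infinite cardinal. Then 𝒫(κ) contains a chain 𝒜 of cardinality κ⁺ such that |A − B| = κ for any two members A and B of 𝒜 with B ⊊ A. -/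
/-!
Let `μ` be least with `κ < 2 ^ μ`, so that each level of the binary tree `2^{<μ}` has at most
`κ` nodes and the tree at most `μ · κ = κ`. Its branches, ordered lexicographically, number `2 ^ μ ≥ κ⁺`, and the nodes form a dense
subset of them, so sending a branch to the set of nodes below it is strictly monotone. Replacing
every node by `κ` points turns each nonempty difference of these sets into one of size `κ`.
-/

open Cardinal Set

universe u

theorem strictMono_setOf_lt_of_dense {α : Type*} [Preorder α] {s : Set α}
    (hs : ∀ a b, a < b → (s ∩ Ico a b).Nonempty) :
    StrictMono fun a : α => {d : s | (d : α) < a} := by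
  intro a b hab
  obtain ⟨d, hd, had, hdb⟩ := hs a b hab
  exact (ssubset_iff_of_subset fun x hx => lt_trans hx hab).2 ⟨⟨d, hd⟩, hdb, had.not_gt⟩

section NodeLex

variable {ι : Type*} [LinearOrder ι]

-- The node `⟨i, s⟩` of `2^{<ι}` as the branch `s`, then `false` at `i`, then `true` above.
def nodeLex (p : Σ i : ι, Iio i → Bool) : Lex (ι → Bool) :=
  toLex fun j => if h : j < p.1 then p.2 ⟨j, h⟩ else decide (p.1 < j)

theorem range_nodeLex_inter_Ico_nonempty [WellFoundedLT ι] {f g : Lex (ι → Bool)} (h : f < g) :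
    (range nodeLex ∩ Ico f g).Nonempty := by
  obtain ⟨i, hfg, hi⟩ := h
  obtain ⟨hfi, hgi⟩ := Bool.lt_iff.1 hi
  refine ⟨_, mem_range_self ⟨i, fun j => f j⟩, Pi.toLex_monotone fun j => ?_, i, fun j hj => ?_, ?_⟩
  · rcases lt_trichotomy j i with hj | rfl | hj
    · simp [hj]
    · simp [hfi]
    · simp [hj, hj.not_gt]
  · simp [nodeLex, hj, hfg j hj]
  · simp [nodeLex, hgi]

theorem mk_range_nodeLex_le {ι : Type u} [LinearOrder ι] {κ : Cardinal.{u}} (hκ : ℵ₀ ≤ κ)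
    (hι : #ι ≤ κ) (h : ∀ i : ι, 2 ^ #(Iio i) ≤ κ) : #(range (nodeLex (ι := ι))) ≤ κ :=
  calc #(range (nodeLex (ι := ι))) ≤ sum fun i : ι => #(Iio i → Bool) :=
        mk_range_le.trans_eq (mk_sigma _)
    _ ≤ #ι * ⨆ i : ι, #(Iio i → Bool) := sum_le_mk_mul_iSup _
    _ ≤ κ * κ := by
      gcongr
      exact ciSup_le' fun i => by simpa using h i
    _ = κ := mul_eq_self hκ

end NodeLex

theorem exists_strictMono_mk_sdiff_eq {D X : Type u} (hD : #D ≤ #X) (hX : ℵ₀ ≤ #X) :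
    ∃ Φ : Set D → Set X, StrictMono Φ ∧ ∀ A B, B ⊂ A → #(Φ A \ Φ B : Set X) = #X := by
  have : Nonempty X := mk_ne_zero_iff.1 (aleph0_pos.trans_le hX).ne'
  obtain ⟨e⟩ : Nonempty (D × X ↪ X) := by
    rw [← le_def, mk_prod, lift_id, lift_id]
    exact (mul_le_mul_left hD _).trans (mul_eq_self hX).le
  refine ⟨fun A => e '' (Prod.fst ⁻¹' A), ?_, fun A B hBA => ?_⟩
  · exact e.injective.image_strictMono.comp
      (Monotone.strictMono_of_injective (fun A B h => preimage_mono h)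
        Prod.fst_surjective.preimage_injective)
  · rw [← image_sdiff e.injective, ← preimage_sdiff, mk_image_eq e.injective, ← prod_univ,
      mk_setProd, mk_univ]
    exact Cardinal.mul_eq_right hX ((mk_set_le _).trans hD)
      (mk_ne_zero_iff.2 (nonempty_of_ssubset hBA).to_subtype)

theorem Cardinal.exists_least_lt_two_power (κ : Cardinal.{u}) :
    ∃ μ ≤ κ, κ < 2 ^ μ ∧ ∀ ν < μ, 2 ^ ν ≤ κ := by
  obtain ⟨μ, hμ, hmin⟩ := Cardinal.lt_wf.has_min {μ | κ < 2 ^ μ} ⟨κ, cantor κ⟩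
  exact ⟨μ, not_lt.1 fun h => hmin κ (cantor κ) h, hμ, fun ν hν => not_lt.1 fun h => hmin ν h hν⟩

/-- Let κ be an infinite cardinal. Then 𝒫(κ) contains a chain 𝒜 of
cardinality κ⁺ such that |A − B| = κ for any two members A and B of 𝒜 with B ⊊ A. -/
theorem exists_chain_card_succ {X : Type u} (κ : Cardinal.{u})
    (hX : Cardinal.mk X = κ) (hκ : Cardinal.aleph0 ≤ κ) :
    ∃ 𝒜 : Set (Set X), IsChain (· ⊆ ·) 𝒜 ∧ Cardinal.mk 𝒜 = Order.succ κ ∧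
      ∀ A ∈ 𝒜, ∀ B ∈ 𝒜, B ⊂ A → Cardinal.mk (A \ B : Set X) = κ := by
  subst hX
  obtain ⟨μ, hμX, hXμ, hmin⟩ := exists_least_lt_two_power #X
  let Λ := μ.ord.ToType
  have hΛ : #Λ = μ := by simp [Λ]
  have hnodes : #(range (nodeLex (ι := Λ))) ≤ #X :=
    mk_range_nodeLex_le hκ (hΛ ▸ hμX) fun i => hmin _ ((mk_Iio_lt i (by simp [Λ])).trans_eq hΛ)
  obtain ⟨Φ, hΦ, hΦsdiff⟩ := exists_strictMono_mk_sdiff_eq hnodes hκ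
  have hcut := strictMono_setOf_lt_of_dense fun _ _ => range_nodeLex_inter_Ico_nonempty (ι := Λ)
  have hH := hΦ.comp hcut
  obtain ⟨S, hS⟩ : ∃ S : Set (Lex (Λ → Bool)), #S = Order.succ #X := by
    refine le_mk_iff_exists_set.1 (Order.succ_le_of_lt ?_)
    change #X < #(Λ → Bool)
    simpa [hΛ] using hXμ
  refine ⟨_ '' S, hH.monotone.isChain_range.mono (image_subset_range _ _),
    by rw [mk_image_eq hH.injective, hS], ?_⟩
  rintro - ⟨b, -, rfl⟩ - ⟨a, -, rfl⟩ hab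
  exact hΦsdiff _ _ (hcut.lt_iff_lt.2 (hH.lt_iff_lt.1 hab))
end

section
/- Let κ be an infinite cardinal, let λ be the smallest cardinal for which κ^λ > κ, let T = (⋃_{α<λ} κ^α) ∪ κ^λ be the set of all functions from ordinals α ≤ λ into κ, and order T by: f ≤ g iff g extends f, or f(i) < g(i) where i is the smallest ordinal at which f and g differ. Then ≤ is a linear order on T, and for any f₁, f₂ ∈ κ^λ with f₁ < f₂, the set {d ∈ D : f₁ < d < f₂} has cardinality κ, where D = ⋃_{α<λ} κ^α. -/
universe u

/-- An element of the tree `T = (⋃_{α<λ} κ^α) ∪ κ^λ`: a function from an ordinal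
`dom ≤ λ` into (the ordinals below) `κ`, encoded as a total function on ordinals
that is zero outside its domain. -/
structure TreeFn (κ lam : Cardinal.{u}) : Type (u + 1) where
  dom : Ordinal.{u}
  dom_le : dom ≤ lam.ord
  toFun : Ordinal.{u} → Ordinal.{u}
  lt_of_mem : ∀ i < dom, toFun i < κ.ord
  eq_zero_of_le : ∀ i, dom ≤ i → toFun i = 0

namespace TreeFn

/-- `g` extends `f`: the domain of `f` is contained in the domain of `g` and
`g` agrees with `f` on the domain of `f`. -/
def Extends {κ lam : Cardinal.{u}} (g f : TreeFn κ lam) : Prop :=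
  f.dom ≤ g.dom ∧ ∀ i < f.dom, f.toFun i = g.toFun i

/-- The ordering on `T`: `f ≤ g` iff `g` extends `f`, or `f i < g i` where `i` is
the smallest ordinal at which `f` and `g` differ. -/
def le {κ lam : Cardinal.{u}} (f g : TreeFn κ lam) : Prop :=
  Extends g f ∨ ∃ i, (∀ j < i, f.toFun j = g.toFun j) ∧ f.toFun i < g.toFun i

/-- The corresponding strict ordering. -/
def lt {κ lam : Cardinal.{u}} (f g : TreeFn κ lam) : Prop :=
  le f g ∧ f ≠ g

end TreeFn

/-!
A `TreeFn` vanishes outside its domain, so `g` extends `f` exactly when either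
`f.toFun = g.toFun` and `f.dom ≤ g.dom`, or the first difference of `f.toFun` and `g.toFun`
lies beyond `f.dom`, where `f` is `0 < g`. Hence the tree order is the lexicographic order of
the pairs `(toFun, dom)`, with `toFun` itself ordered lexicographically: a linear order.

If `f₁ < f₂` have length `λ` and first differ at `i₀ < λ`, then for each `v < κ` the sequence of
length `i₀ + 2` that copies `f₁` below `i₀ + 1` and takes the value `succ (f₁ (i₀ + 1)) + v` there
lies strictly between them; its length is below `λ` because `λ` is infinite, hence a limit.
Conversely there are at most `∑_{β<λ} κ^|β| ≤ λ · κ = κ` sequences of length `< λ`, since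
`κ^μ ≤ κ` for `μ < λ`, and `λ ≤ κ` by Cantor's theorem.
-/

namespace Cardinal

theorem aleph0_le_of_lt_power {κ lam : Cardinal.{u}} (hκ : ℵ₀ ≤ κ) (hlam : κ < κ ^ lam) :
    ℵ₀ ≤ lam := by
  by_contra! hfin
  obtain ⟨n, rfl⟩ := lt_aleph0.1 hfin
  exact (power_nat_le hκ).not_gt hlam

theorem le_of_forall_lt_power_le {κ lam : Cardinal.{u}} (hκ : 1 < κ)
    (hleast : ∀ μ < lam, κ ^ μ ≤ κ) : lam ≤ κ := by
  by_contra! hκlam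
  exact (hleast κ hκlam).not_gt (cantor' κ hκ)

end Cardinal

open Cardinal Order Set

namespace TreeFn

variable {κ lam : Cardinal.{u}}

theorem ext {f g : TreeFn κ lam} (hdom : f.dom = g.dom) (hfun : f.toFun = g.toFun) : f = g := by
  cases f; cases g; simp_all

theorem lt_dom_of_toFun_ne_zero {f : TreeFn κ lam} {i : Ordinal.{u}} (hi : f.toFun i ≠ 0) :
    i < f.dom :=
  lt_of_not_ge fun h => hi (f.eq_zero_of_le i h)

def lexKey (f : TreeFn κ lam) : Lex (Ordinal.{u} → Ordinal.{u}) ×ₗ Ordinal.{u} :=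
  toLex (toLex f.toFun, f.dom)

theorem lexKey_injective : Function.Injective (lexKey : TreeFn κ lam → _) := fun f g h => by
  simp only [lexKey, toLex_inj, Prod.mk.injEq] at h
  exact ext h.2 h.1

theorem le_iff_lexKey_le {f g : TreeFn κ lam} : le f g ↔ lexKey f ≤ lexKey g := by
  rw [lexKey, lexKey, Prod.Lex.toLex_le_toLex]
  constructor
  · rintro (⟨hdom, hagree⟩ | hlex)
    · rcases lt_trichotomy (toLex f.toFun) (toLex g.toFun) with hlt | heq | ⟨i, -, hgf⟩
      · exact Or.inl hlt
      · exact Or.inr ⟨heq, hdom⟩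
      · exact absurd (hagree i (lt_dom_of_toFun_ne_zero (ne_bot_of_gt hgf))) (ne_of_gt hgf)
    · exact Or.inl hlex
  · rintro (hlex | ⟨heq, hdom⟩)
    · exact Or.inr hlex
    · exact Or.inl ⟨hdom, fun i _ => congrFun heq i⟩

theorem lt_iff_lexKey_lt {f g : TreeFn κ lam} : lt f g ↔ lexKey f < lexKey g := by
  rw [lt, le_iff_lexKey_le, lt_iff_le_and_ne, lexKey_injective.ne_iff]

theorem le.refl (f : TreeFn κ lam) : le f f :=
  le_iff_lexKey_le.2 le_rfl

theorem le.antisymm {f g : TreeFn κ lam} (hfg : le f g) (hgf : le g f) : f = g :=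
  lexKey_injective (le_antisymm (le_iff_lexKey_le.1 hfg) (le_iff_lexKey_le.1 hgf))

theorem le.trans {f g h : TreeFn κ lam} (hfg : le f g) (hgh : le g h) : le f h :=
  le_iff_lexKey_le.2 ((le_iff_lexKey_le.1 hfg).trans (le_iff_lexKey_le.1 hgh))

theorem le_total (f g : TreeFn κ lam) : le f g ∨ le g f := by
  simp only [le_iff_lexKey_le]
  exact _root_.le_total _ _

theorem lt_of_agree_of_lt {f g : TreeFn κ lam} {i : Ordinal.{u}}
    (hbelow : ∀ j < i, f.toFun j = g.toFun j) (hi : f.toFun i < g.toFun i) : lt f g :=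
  lt_iff_lexKey_lt.2 (Prod.Lex.toLex_lt_toLex.2 (Or.inl ⟨i, hbelow, hi⟩))

theorem exists_agree_lt_of_lt_of_dom_eq {f g : TreeFn κ lam} (h : lt f g)
    (hdom : f.dom = g.dom) :
    ∃ i, (∀ j < i, f.toFun j = g.toFun j) ∧ f.toFun i < g.toFun i := by
  rcases Prod.Lex.toLex_lt_toLex.1 (lt_iff_lexKey_lt.1 h) with hlt | ⟨-, hlt⟩
  · exact hlt
  · exact absurd hdom hlt.ne

noncomputable def restrictSnoc (f : TreeFn κ lam) {α : Ordinal.{u}} (hα : α < f.dom)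
    {x : Ordinal.{u}} (hx : x < κ.ord) : TreeFn κ lam where
  dom := succ α
  dom_le := (succ_le_of_lt hα).trans f.dom_le
  toFun j := if j < α then f.toFun j else if j = α then x else 0
  lt_of_mem j hj := by
    rcases (lt_succ_iff.1 hj).lt_or_eq with hjα | rfl
    · simpa [hjα] using f.lt_of_mem j (hjα.trans hα)
    · simpa using hx
  eq_zero_of_le j hj := by
    have hαj : α < j := succ_le_iff.1 hj
    simp [hαj.not_gt, hαj.ne']

section restrictSnoc

variable {f : TreeFn κ lam} {α : Ordinal.{u}} (hα : α < f.dom) {x : Ordinal.{u}}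
  (hx : x < κ.ord)

theorem restrictSnoc_toFun_of_lt {j : Ordinal.{u}} (hj : j < α) :
    (f.restrictSnoc hα hx).toFun j = f.toFun j := by
  simp [restrictSnoc, hj]

theorem restrictSnoc_toFun_self : (f.restrictSnoc hα hx).toFun α = x := by
  simp [restrictSnoc]

theorem lt_restrictSnoc (hfx : f.toFun α < x) : lt f (f.restrictSnoc hα hx) :=
  lt_of_agree_of_lt (fun j hj => (restrictSnoc_toFun_of_lt hα hx hj).symm)
    (by rwa [restrictSnoc_toFun_self])

theorem restrictSnoc_lt {g : TreeFn κ lam} {i : Ordinal.{u}} (hiα : i < α)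
    (hfg : ∀ j < i, f.toFun j = g.toFun j) (hfgi : f.toFun i < g.toFun i) :
    lt (f.restrictSnoc hα hx) g :=
  lt_of_agree_of_lt (fun j hj => (restrictSnoc_toFun_of_lt hα hx (hj.trans hiα)).trans (hfg j hj))
    (by rwa [restrictSnoc_toFun_of_lt hα hx hiα])

end restrictSnoc

theorem lift_le_mk_between (hκ : ℵ₀ ≤ κ) (hlam : ℵ₀ ≤ lam) {f₁ f₂ : TreeFn κ lam}
    (h₁ : f₁.dom = lam.ord) {i₀ : Ordinal.{u}} (hbelow : ∀ j < i₀, f₁.toFun j = f₂.toFun j)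
    (hi₀ : f₁.toFun i₀ < f₂.toFun i₀) :
    lift.{u + 1} κ ≤ #{d : TreeFn κ lam // d.dom < lam.ord ∧ lt f₁ d ∧ lt d f₂} := by
  have hi₀lam : i₀ < lam.ord :=
    (lt_dom_of_toFun_ne_zero (ne_bot_of_gt hi₀)).trans_le f₂.dom_le
  have hlim : IsSuccLimit lam.ord := isSuccLimit_ord hlam
  have hα : succ i₀ < f₁.dom := h₁ ▸ hlim.succ_lt hi₀lam
  have hval : ∀ v < κ.ord, succ (f₁.toFun (succ i₀)) + v < κ.ord := fun v hv =>
    Ordinal.isPrincipal_add_ord hκ ((isSuccLimit_ord hκ).succ_lt (f₁.lt_of_mem _ hα)) hv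
  let d (v : Iio κ.ord) : TreeFn κ lam := f₁.restrictSnoc hα (hval v.1 v.2)
  have hd_between (v : Iio κ.ord) : (d v).dom < lam.ord ∧ lt f₁ (d v) ∧ lt (d v) f₂ :=
    ⟨hlim.succ_lt (hlim.succ_lt hi₀lam),
      lt_restrictSnoc hα _ ((lt_succ _).trans_le le_self_add),
      restrictSnoc_lt hα _ (lt_succ i₀) hbelow hi₀⟩
  have hd_injective : Function.Injective fun v =>
      (⟨d v, hd_between v⟩ : {d : TreeFn κ lam // d.dom < lam.ord ∧ lt f₁ d ∧ lt d f₂}) := by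
    intro v w hvw
    have := congrArg (fun e => e.1.toFun (succ i₀)) hvw
    simp only [d, restrictSnoc_toFun_self] at this
    exact Subtype.ext (add_left_cancel this)
  calc lift.{u + 1} κ = #(Iio κ.ord) := by rw [Cardinal.mk_Iio_ordinal, card_ord]
    _ ≤ _ := mk_le_of_injective hd_injective

theorem mk_dom_lt_le_sum :
    #{d : TreeFn κ lam // d.dom < lam.ord} ≤
      sum fun β : Iio lam.ord => #(Iio β.1 → Iio κ.ord) := by
  rw [← mk_sigma]
  refine mk_le_of_injective
    (f := fun d => ⟨⟨d.1.dom, d.2⟩, fun j => ⟨d.1.toFun j, d.1.lt_of_mem j j.2⟩⟩) ?_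
  rintro ⟨⟨dom₁, _, toFun₁, _, hzero₁⟩, _⟩ ⟨⟨dom₂, _, toFun₂, _, hzero₂⟩, _⟩ h
  obtain ⟨hdom, hfun⟩ := Sigma.ext_iff.1 h
  obtain rfl : dom₁ = dom₂ := congrArg Subtype.val hdom
  refine Subtype.ext (ext rfl (funext fun j => ?_))
  rcases lt_or_ge j dom₁ with hj | hj
  · exact congrArg Subtype.val (congrFun (eq_of_heq hfun) ⟨j, hj⟩)
  · exact (hzero₁ j hj).trans (hzero₂ j hj).symm

theorem mk_dom_lt_le (hκ : ℵ₀ ≤ κ) (hleast : ∀ μ < lam, κ ^ μ ≤ κ) :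
    #{d : TreeFn κ lam // d.dom < lam.ord} ≤ lift.{u + 1} κ := by
  have hfiber (β : Iio lam.ord) : #(Iio β.1 → Iio κ.ord) ≤ lift.{u + 1} κ := by
    rw [← power_def, Cardinal.mk_Iio_ordinal, Cardinal.mk_Iio_ordinal, card_ord, ← lift_power,
      lift_le]
    exact hleast _ (lt_ord.1 β.2)
  have hlamκ : lam ≤ κ := le_of_forall_lt_power_le (one_lt_aleph0.trans_le hκ) hleast
  calc #{d : TreeFn κ lam // d.dom < lam.ord}
      ≤ sum fun _ : Iio lam.ord => lift.{u + 1} κ :=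
        mk_dom_lt_le_sum.trans (sum_le_sum _ _ hfiber)
    _ = lift.{u + 1} (lam * κ) := by rw [sum_const', Cardinal.mk_Iio_ordinal, card_ord, lift_mul]
    _ ≤ lift.{u + 1} κ := lift_le.2 ((mul_le_mul_left hlamκ κ).trans (mul_eq_self hκ).le)

theorem mk_between_eq (hκ : ℵ₀ ≤ κ) (hlam : κ < κ ^ lam) (hleast : ∀ μ < lam, κ ^ μ ≤ κ)
    {f₁ f₂ : TreeFn κ lam} (h₁ : f₁.dom = lam.ord) (h₂ : f₂.dom = lam.ord) (h₁₂ : lt f₁ f₂) :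
    #{d : TreeFn κ lam // d.dom < lam.ord ∧ lt f₁ d ∧ lt d f₂} = lift.{u + 1} κ := by
  obtain ⟨i₀, hbelow, hi₀⟩ := exists_agree_lt_of_lt_of_dom_eq h₁₂ (h₁.trans h₂.symm)
  exact le_antisymm ((mk_subtype_mono fun _ hd => hd.1).trans (mk_dom_lt_le hκ hleast))
    (lift_le_mk_between hκ (aleph0_le_of_lt_power hκ hlam) h₁ hbelow hi₀)

end TreeFn

/-- Let κ be an infinite cardinal and λ the smallest cardinal with
κ^λ > κ. Order the tree T of functions from ordinals α ≤ λ into κ by: f ≤ g iff g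
extends f, or f(i) < g(i) at the smallest ordinal i where f and g differ. Then ≤ is
a linear order on T, and for any f₁ < f₂ in κ^λ, the set of elements of
D = ⋃_{α<λ} κ^α strictly between f₁ and f₂ has cardinality κ. -/
theorem treeFn_linearOrder_and_between (κ lam : Cardinal.{u})
    (hκ : Cardinal.aleph0 ≤ κ) (hlam : κ < κ ^ lam)
    (hleast : ∀ μ : Cardinal.{u}, μ < lam → κ ^ μ ≤ κ) :
    ((∀ f : TreeFn κ lam, TreeFn.le f f) ∧
     (∀ f g : TreeFn κ lam, TreeFn.le f g → TreeFn.le g f → f = g) ∧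
     (∀ f g h : TreeFn κ lam, TreeFn.le f g → TreeFn.le g h → TreeFn.le f h) ∧
     (∀ f g : TreeFn κ lam, TreeFn.le f g ∨ TreeFn.le g f)) ∧
    (∀ f₁ f₂ : TreeFn κ lam, f₁.dom = lam.ord → f₂.dom = lam.ord →
      TreeFn.lt f₁ f₂ →
      Cardinal.mk {d : TreeFn κ lam // d.dom < lam.ord ∧
        TreeFn.lt f₁ d ∧ TreeFn.lt d f₂} = Cardinal.lift.{u + 1} κ) :=
  ⟨⟨TreeFn.le.refl, fun _ _ => TreeFn.le.antisymm, fun _ _ _ => TreeFn.le.trans,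
      TreeFn.le_total⟩,
    fun _ _ h₁ h₂ h₁₂ => TreeFn.mk_between_eq hκ hlam hleast h₁ h₂ h₁₂⟩
end

section
/- Let κ be an infinite cardinal and let λ be the smallest cardinal for which κ^λ > κ. Then the set D = ⋃_{α<λ} κ^α of all functions from ordinals α < λ into κ has cardinality κ. -/
/-!
Identifying `D` with `Σ α < λ, κ^α`, its cardinality is `∑_{α<λ} κ^|α|`. By minimality of `λ`
each summand is at most `κ`, and `λ ≤ κ` because `κ^κ = 2^κ > κ`; so the sum is at most
`λ · κ = κ`. Conversely `λ > 1` (as `κ^λ > κ = κ^1`), so the summand at `α = 1` is already `κ`.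
-/

universe u

/-- An element of `D = ⋃_{α<λ} κ^α`: a function from an ordinal `dom < λ` into
(the ordinals below) `κ`, encoded as a total function on ordinals that is zero
outside its domain (so that each such partial function has a unique encoding). -/
structure SmallTreeFn (κ lam : Cardinal.{u}) : Type (u + 1) where
  dom : Ordinal.{u}
  dom_lt : dom < lam.ord
  toFun : Ordinal.{u} → Ordinal.{u}
  lt_of_mem : ∀ i < dom, toFun i < κ.ord
  eq_zero_of_le : ∀ i, dom ≤ i → toFun i = 0

open Cardinal

noncomputable def smallTreeFnEquiv (κ lam : Cardinal.{u}) :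
    SmallTreeFn κ lam ≃ Σ α : Set.Iio lam.ord, (Set.Iio α.1 → Set.Iio κ.ord) where
  toFun f := ⟨⟨f.dom, f.dom_lt⟩, fun i => ⟨f.toFun i.1, f.lt_of_mem i.1 i.2⟩⟩
  invFun p :=
    { dom := p.1.1
      dom_lt := p.1.2
      toFun := fun i => if h : i < p.1.1 then (p.2 ⟨i, h⟩).1 else 0
      lt_of_mem := fun i hi => by simp only [dif_pos hi]; exact (p.2 ⟨i, hi⟩).2
      eq_zero_of_le := fun i hi => dif_neg (not_lt.2 hi) }
  left_inv := by
    rintro ⟨d, hd, t, hlt, hzero⟩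
    dsimp only
    congr 1
    funext i
    split_ifs with h
    · rfl
    · exact (hzero i (not_lt.1 h)).symm
  right_inv := by
    rintro ⟨α, g⟩
    exact Sigma.ext rfl (heq_of_eq (funext fun i => Subtype.ext (dif_pos i.2)))

theorem mk_smallTreeFn (κ lam : Cardinal.{u}) :
    #(SmallTreeFn κ lam) = sum fun α : Set.Iio lam.ord => lift.{u + 1} (κ ^ α.1.card) := by
  rw [mk_congr (smallTreeFnEquiv κ lam), mk_sigma]
  refine congrArg sum (funext fun α => ?_)
  rw [← power_def, mk_Iio_ordinal, mk_Iio_ordinal, card_ord, lift_power]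

theorem Cardinal.le_of_forall_lt_power_le_self {κ lam : Cardinal.{u}} (hκ : ℵ₀ ≤ κ)
    (h : ∀ μ < lam, κ ^ μ ≤ κ) : lam ≤ κ := by
  by_contra! hlt
  exact (h κ hlt).not_gt ((cantor κ).trans_eq (power_self_eq hκ).symm)

theorem Cardinal.one_lt_of_lt_power {κ lam : Cardinal.{u}} (hκ : κ ≠ 0) (h : κ < κ ^ lam) :
    1 < lam := by
  by_contra! hle
  exact (h.trans_le ((power_le_power_left hκ hle).trans_eq (power_one κ))).false

theorem mk_smallTreeFn_le {κ lam : Cardinal.{u}} (hκ : ℵ₀ ≤ κ)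
    (h : ∀ μ < lam, κ ^ μ ≤ κ) : #(SmallTreeFn κ lam) ≤ lift.{u + 1} κ := by
  have hlam : lam ≤ κ := le_of_forall_lt_power_le_self hκ h
  calc #(SmallTreeFn κ lam)
      ≤ sum fun _ : Set.Iio lam.ord => lift.{u + 1} κ := by
        rw [mk_smallTreeFn]
        exact sum_le_sum _ _ fun α => lift_le.2 (h _ (lt_ord.1 α.2))
    _ = lift.{u + 1} (lam * κ) := by
        rw [sum_const', mk_Iio_ordinal, card_ord, lift_mul]
    _ ≤ lift.{u + 1} κ :=
        lift_le.2 ((mul_le_mul_left hlam κ).trans_eq (mul_eq_self hκ))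

theorem lift_le_mk_smallTreeFn {κ lam : Cardinal.{u}} (hlam : 1 < lam) :
    lift.{u + 1} κ ≤ #(SmallTreeFn κ lam) := by
  rw [mk_smallTreeFn]
  simpa using le_sum.{u + 1, u + 1} (fun α : Set.Iio lam.ord => lift.{u + 1} (κ ^ α.1.card))
    ⟨1, lt_ord.2 (by rwa [Ordinal.card_one])⟩

/-- Let κ be an infinite cardinal and let λ be the smallest cardinal
for which κ^λ > κ. Then the set D = ⋃_{α<λ} κ^α of all functions from ordinals
α < λ into κ has cardinality κ. -/
theorem card_smallTreeFn (κ lam : Cardinal.{u})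
    (hκ : Cardinal.aleph0 ≤ κ) (hlam : κ < κ ^ lam)
    (hleast : ∀ μ : Cardinal.{u}, μ < lam → κ ^ μ ≤ κ) :
    Cardinal.mk (SmallTreeFn κ lam) = Cardinal.lift.{u + 1} κ :=
  le_antisymm (mk_smallTreeFn_le hκ hleast)
    (lift_le_mk_smallTreeFn (one_lt_of_lt_power (aleph0_pos.trans_le hκ).ne' hlam))
end

section
/- Let κ and λ be infinite cardinals with κ < λ ≤ 2^κ. If for some (equivalently, every) set X of cardinality κ the poset 𝒫(X) contains a chain of cardinality ≥ λ, then there exists a linearly ordered set of cardinality ≥ λ which has a dense subset of cardinality κ. -/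
/-!
Order a chain `𝒜 ⊆ 𝒫(X)` by inclusion. If `A ⊂ C ⊂ B` in `𝒜`, pick `x ∈ C \ A` and
`y ∈ B \ C`; every member of `𝒜` containing `x` but not `y` lies strictly between `A` and `B`.
So choosing one such member for each pair `(x, y) ∈ X × X` gives a dense subset of size at
most `|X|² = κ`, which is then padded to size exactly `κ`.
-/

open Cardinal Set

universe u

def IsOrderDense {L : Type*} [Preorder L] (D : Set L) : Prop :=
  ∀ a b : L, a < b → (Ioo a b).Nonempty → ∃ d ∈ D, a < d ∧ d < b

theorem IsOrderDense.mono {L : Type*} [Preorder L] {D D' : Set L} (hD : IsOrderDense D)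
    (hDD' : D ⊆ D') : IsOrderDense D' := fun a b hab hIoo =>
  let ⟨d, hd, had, hdb⟩ := hD a b hab hIoo
  ⟨d, hDD' hd, had, hdb⟩

theorem StrictMono.exists_isOrderDense_range {L X : Type*} [LinearOrder L] [Nonempty L]
    {f : L → Set X} (hf : StrictMono f) : ∃ g : X × X → L, IsOrderDense (range g) := by
  let g : X × X → L := fun p => Classical.epsilon fun d => p.1 ∈ f d ∧ p.2 ∉ f d
  have lt_of_mem_of_notMem {x : X} {a d : L} (hxd : x ∈ f d) (hxa : x ∉ f a) : a < d :=
    lt_of_not_ge fun hda => hxa (hf.monotone hda hxd)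
  refine ⟨g, fun a b _ ⟨c, hac, hcb⟩ => ?_⟩
  obtain ⟨x, hxc, hxa⟩ := exists_of_ssubset (hf hac)
  obtain ⟨y, hyb, hyc⟩ := exists_of_ssubset (hf hcb)
  obtain ⟨hxg, hyg⟩ : x ∈ f (g (x, y)) ∧ y ∉ f (g (x, y)) :=
    Classical.epsilon_spec (p := fun d => x ∈ f d ∧ y ∉ f d) ⟨c, hxc, hyc⟩
  exact ⟨g (x, y), mem_range_self _, lt_of_mem_of_notMem hxg hxa, lt_of_mem_of_notMem hyb hyg⟩

theorem Cardinal.exists_superset_mk_eq {L : Type u} {D : Set L} {κ : Cardinal.{u}}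
    (hκ : ℵ₀ ≤ κ) (hD : #D ≤ κ) (hκL : κ ≤ #L) : ∃ D' : Set L, D ⊆ D' ∧ #D' = κ := by
  obtain ⟨S, rfl⟩ := le_mk_iff_exists_set.mp hκL
  refine ⟨D ∪ S, subset_union_left, le_antisymm ?_ (mk_le_mk_of_subset subset_union_right)⟩
  exact (mk_union_le D S).trans (add_le_of_le hκ hD le_rfl)

theorem dense_linear_order_of_chain_general (κ lam : Cardinal.{u})
    (hκ : Cardinal.aleph0 ≤ κ) (hκlam : κ < lam)
    (hchain : ∃ (X : Type u), Cardinal.mk X = κ ∧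
      ∃ 𝒜 : Set (Set X), IsChain (· ⊆ ·) 𝒜 ∧ lam ≤ Cardinal.mk 𝒜) :
    ∃ (L : Type u) (_ : LinearOrder L), lam ≤ Cardinal.mk L ∧
      ∃ D : Set L, Cardinal.mk D = κ ∧
        ∀ a b : L, a < b → (Set.Ioo a b).Nonempty → ∃ d ∈ D, a < d ∧ d < b := by
  classical
  obtain ⟨X, rfl, 𝒜, h𝒜, hlam𝒜⟩ := hchain
  let _ : LinearOrder 𝒜 := h𝒜.linearOrder
  have : Nonempty 𝒜 := mk_ne_zero_iff.mp (hκlam.trans_le hlam𝒜).ne_bot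
  have hval : StrictMono ((↑) : 𝒜 → Set X) := fun _ _ h => h
  obtain ⟨g, hg⟩ := hval.exists_isOrderDense_range
  have hrange : #(range g) ≤ #X :=
    mk_range_le.trans_eq (by rw [mk_prod, lift_id, mul_eq_self hκ])
  obtain ⟨D, hgD, hD⟩ := exists_superset_mk_eq hκ hrange (hκlam.le.trans hlam𝒜)
  exact ⟨𝒜, _, hlam𝒜, D, hD, hg.mono hgD⟩

/-- Let κ and λ be infinite cardinals with κ < λ ≤ 2^κ. If for some set
X of cardinality κ the poset 𝒫(X) contains a chain of cardinality ≥ λ, then there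
exists a linearly ordered set of cardinality ≥ λ which has a dense subset (one
meeting every nonempty open interval) of cardinality κ. -/
theorem dense_linear_order_of_chain (κ lam : Cardinal.{u})
    (hκ : Cardinal.aleph0 ≤ κ) (hκlam : κ < lam) (hlam : lam ≤ 2 ^ κ)
    (hchain : ∃ (X : Type u), Cardinal.mk X = κ ∧
      ∃ 𝒜 : Set (Set X), IsChain (· ⊆ ·) 𝒜 ∧ lam ≤ Cardinal.mk 𝒜) :
    ∃ (L : Type u) (_ : LinearOrder L), lam ≤ Cardinal.mk L ∧
      ∃ D : Set L, Cardinal.mk D = κ ∧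
        ∀ a b : L, a < b → (Set.Ioo a b).Nonempty → ∃ d ∈ D, a < d ∧ d < b :=
  dense_linear_order_of_chain_general κ lam hκ hκlam hchain
end

section
/- Let X be a set and let x, y be two distinct elements of X. Then the collection 𝒞 = {S ⊆ X : |S ∩ {x, y}| = 1} is a cutset in 𝒫(X), i.e. 𝒞 meets every maximal chain of 𝒫(X). -/
/-- Let X be a set and x, y two distinct elements of X. Then the
collection 𝒞 = {S ⊆ X : |S ∩ {x, y}| = 1} meets every maximal chain of 𝒫(X),
i.e. 𝒞 is a cutset in 𝒫(X). -/
theorem pair_cutset {X : Type u} (x y : X) (hxy : x ≠ y) :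
    ∀ M : Set (Set X), IsMaxChain (· ⊆ ·) M →
      ({S : Set X | (S ∩ {x, y}).ncard = 1} ∩ M).Nonempty := by
  intro M hM
  by_contra h
  rw [Set.not_nonempty_iff_eq_empty, Set.eq_empty_iff_forall_notMem] at h
  -- every S ∈ M has S ∩ {x,y} either ∅ or {x,y}
  have key : ∀ S ∈ M, (x ∉ S ∧ y ∉ S) ∨ (x ∈ S ∧ y ∈ S) := by
    intro S hS
    by_cases hx : x ∈ S <;> by_cases hy : y ∈ S
    · exact Or.inr ⟨hx, hy⟩
    · exfalso
      apply h S ⟨?_, hS⟩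
      have : S ∩ {x, y} = {x} := by
        ext z; constructor
        · rintro ⟨hz, hz2⟩
          rcases hz2 with rfl | rfl
          · rfl
          · exact absurd hz hy
        · rintro rfl; exact ⟨hx, Or.inl rfl⟩
      simp [Set.mem_setOf_eq, this]
    · exfalso
      apply h S ⟨?_, hS⟩
      have : S ∩ {x, y} = {y} := by
        ext z; constructor
        · rintro ⟨hz, hz2⟩
          rcases hz2 with rfl | rfl
          · exact absurd hz hx
          · rfl
        · rintro rfl; exact ⟨hy, Or.inr rfl⟩
      simp [Set.mem_setOf_eq, this]
    · exact Or.inl ⟨hx, hy⟩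
  set U : Set X := ⋃ S ∈ {S ∈ M | x ∉ S ∧ y ∉ S}, S with hU
  set T : Set X := insert x U with hT
  have hTx : x ∈ T := Set.mem_insert _ _
  have hTy : y ∉ T := by
    intro hy
    rcases hy with h1 | h1
    · exact hxy h1.symm
    · rcases Set.mem_iUnion₂.mp h1 with ⟨S, hS, hyS⟩
      exact hS.2.2 hyS
  have hTnotM : T ∉ M := by
    intro hTM
    rcases key T hTM with ⟨h1, _⟩ | ⟨_, h2⟩
    · exact h1 hTx
    · exact hTy h2
  -- T is comparable with every member of M
  have hcomp : ∀ S ∈ M, T ⊆ S ∨ S ⊆ T := by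
    intro S hS
    rcases key S hS with ⟨hx, hy⟩ | ⟨hx, hy⟩
    · right
      intro z hz
      exact Or.inr (Set.mem_iUnion₂.mpr ⟨S, ⟨hS, hx, hy⟩, hz⟩)
    · left
      rintro z (rfl | hz)
      · exact hx
      · rcases Set.mem_iUnion₂.mp hz with ⟨S', hS', hzS'⟩
        rcases hM.1 hS'.1 hS (by rintro rfl; exact hS'.2.1 hx) with hle | hle
        · exact hle hzS'
        · exact absurd (hle hx) hS'.2.1
  have hchain : IsChain (· ⊆ ·) (insert T M) := by
    apply hM.1.insert
    intro S hS _
    rcases hcomp S hS with h1 | h1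
    · exact Or.inl h1
    · exact Or.inr h1
  have := hM.2 hchain (Set.subset_insert _ _)
  exact hTnotM (this ▸ Set.mem_insert T M)
end

section
/- Let X be a set, let x, y be two distinct elements of X, and let 𝒞 = {S ⊆ X : |S ∩ {x, y}| = 1}. Then 𝒞 is a minimal cutset in 𝒫(X): for every S₀ ∈ 𝒞, the collection 𝒞 − {S₀} is not a cutset in 𝒫(X). -/
lemma pair_ncard_one_iff {X : Type u} {x y : X} (hxy : x ≠ y) (S : Set X) :
    (S ∩ {x, y}).ncard = 1 ↔ (x ∈ S ∧ y ∉ S) ∨ (y ∈ S ∧ x ∉ S) := by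
  by_cases hx : x ∈ S <;> by_cases hy : y ∈ S
  · have h : S ∩ {x, y} = {x, y} := by
      ext z; simp only [Set.mem_inter_iff, Set.mem_insert_iff, Set.mem_singleton_iff]
      constructor
      · tauto
      · rintro (rfl | rfl) <;> simp [hx, hy]
    rw [h, Set.ncard_pair hxy]; simp [hx, hy]
  · have h : S ∩ {x, y} = {x} := by
      ext z; simp only [Set.mem_inter_iff, Set.mem_insert_iff, Set.mem_singleton_iff]
      constructor
      · rintro ⟨hz, rfl | rfl⟩ <;> tauto
      · rintro rfl; simp [hx]
    rw [h, Set.ncard_singleton]; simp [hx, hy]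
  · have h : S ∩ {x, y} = {y} := by
      ext z; simp only [Set.mem_inter_iff, Set.mem_insert_iff, Set.mem_singleton_iff]
      constructor
      · rintro ⟨hz, rfl | rfl⟩ <;> tauto
      · rintro rfl; simp [hy]
    rw [h, Set.ncard_singleton]; simp [hx, hy]
  · have h : S ∩ {x, y} = ∅ := by
      ext z; simp only [Set.mem_inter_iff, Set.mem_insert_iff, Set.mem_singleton_iff]
      constructor
      · rintro ⟨hz, rfl | rfl⟩ <;> tauto
      · tauto
    rw [h, Set.ncard_empty]; simp [hx, hy]

/-- Auxiliary: if `x ∈ S₀` and `y ∉ S₀` then there is a maximal chain in which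
`S₀` is the only set containing exactly one of `x, y`. -/
lemma part2_aux {X : Type u} (x y : X) (hxy : x ≠ y) (S₀ : Set X)
    (hx : x ∈ S₀) (hy : y ∉ S₀) :
    ∃ M : Set (Set X), IsMaxChain (· ⊆ ·) M ∧
      ∀ S ∈ M, (S ∩ {x, y}).ncard = 1 → S = S₀ := by
  set A : Set X := S₀ \ {x} with hA
  set B : Set X := S₀ ∪ {y} with hB
  have hAS : A ⊆ S₀ := Set.diff_subset
  have hSB : S₀ ⊆ B := Set.subset_union_left
  have hchain : IsChain (· ⊆ ·) ({A, S₀, B} : Set (Set X)) := by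
    intro u hu v hv huv
    simp only [Set.mem_insert_iff, Set.mem_singleton_iff] at hu hv
    rcases hu with rfl | rfl | rfl <;> rcases hv with rfl | rfl | rfl <;>
      first
        | exact absurd rfl huv
        | exact Or.inl (by first | exact hAS | exact hSB | exact hAS.trans hSB)
        | exact Or.inr (by first | exact hAS | exact hSB | exact hAS.trans hSB)
  obtain ⟨M, hM, hsub⟩ := hchain.exists_maxChain
  refine ⟨M, hM, fun S hS hone => ?_⟩
  have hAM : A ∈ M := hsub (by simp)
  have hSM : S₀ ∈ M := hsub (by simp)
  have hBM : B ∈ M := hsub (by simp)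
  rw [pair_ncard_one_iff hxy] at hone
  have cA : A ⊆ S ∨ S ⊆ A := by
    rcases eq_or_ne S A with rfl | h
    · exact Or.inl subset_rfl
    · exact (hM.1 hAM hS (Ne.symm h)).imp id id
  have cS : S₀ ⊆ S ∨ S ⊆ S₀ := by
    rcases eq_or_ne S S₀ with rfl | h
    · exact Or.inl subset_rfl
    · exact (hM.1 hSM hS (Ne.symm h)).imp id id
  have cB : B ⊆ S ∨ S ⊆ B := by
    rcases eq_or_ne S B with rfl | h
    · exact Or.inl subset_rfl
    · exact (hM.1 hBM hS (Ne.symm h)).imp id id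
  rcases hone with ⟨hxS, hyS⟩ | ⟨hyS, hxS⟩
  · -- x ∈ S, y ∉ S : show S = S₀
    have h1 : S₀ ⊆ S := by
      rcases cA with hAS' | hSA
      · intro z hz
        rcases eq_or_ne z x with rfl | hzx
        · exact hxS
        · exact hAS' ⟨hz, hzx⟩
      · exact absurd rfl (hSA hxS).2
    have h2 : S ⊆ S₀ := by
      rcases cB with hBS | hSB'
      · exact absurd (hBS (Or.inr rfl)) hyS
      · intro z hz
        rcases hSB' hz with h | h
        · exact h
        · exact absurd (h ▸ hz) (by simpa [Set.mem_singleton_iff.mp h] using hyS)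
    exact h2.antisymm h1
  · -- y ∈ S, x ∉ S : impossible
    rcases cS with h | h
    · exact absurd (h hx) hxS
    · exact absurd (h hyS) hy

/-- Let X be a set, x ≠ y elements of X, and
𝒞 = {S ⊆ X : |S ∩ {x, y}| = 1}. Then 𝒞 is a minimal cutset in 𝒫(X): it is a
cutset, and for every S₀ ∈ 𝒞 the collection 𝒞 − {S₀} is not a cutset in 𝒫(X). -/
theorem pair_cutset_minimal {X : Type u} (x y : X) (hxy : x ≠ y) :
    (∀ M : Set (Set X), IsMaxChain (· ⊆ ·) M →
      ({S : Set X | (S ∩ {x, y}).ncard = 1} ∩ M).Nonempty) ∧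
    ∀ S₀ ∈ {S : Set X | (S ∩ {x, y}).ncard = 1},
      ¬ ∀ M : Set (Set X), IsMaxChain (· ⊆ ·) M →
        (({S : Set X | (S ∩ {x, y}).ncard = 1} \ {S₀}) ∩ M).Nonempty := by
  constructor
  · intro M hM
    by_contra hemp
    rw [Set.not_nonempty_iff_eq_empty] at hemp
    have hnone : ∀ S ∈ M, (x ∈ S ↔ y ∈ S) := by
      intro S hS
      by_contra h
      have h1 : (S ∩ {x, y}).ncard = 1 := by
        rw [pair_ncard_one_iff hxy]; tauto
      have : S ∈ ({S : Set X | (S ∩ {x, y}).ncard = 1} ∩ M) := ⟨h1, hS⟩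
      rw [hemp] at this; exact this
    set L : Set X := ⋃₀ {S | S ∈ M ∧ x ∉ S} with hL
    set B : Set X := insert x L with hB
    have hcomp : ∀ S ∈ M, B ≠ S → B ⊆ S ∨ S ⊆ B := by
      intro S hS _
      by_cases hxS : x ∈ S
      · left
        intro z hz
        rcases hz with rfl | hz
        · exact hxS
        · obtain ⟨T, ⟨hTM, hTx⟩, hzT⟩ := hz
          rcases hM.1.total hTM hS with h | h
          · exact h hzT
          · exact absurd (h hxS) hTx
      · right
        exact fun z hz => Or.inr ⟨S, ⟨hS, hxS⟩, hz⟩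
    have hBM : B ∈ M := by
      have := hM.2 (hM.1.insert fun S hS hne => hcomp S hS hne)
        (Set.subset_insert _ _)
      rw [this]; exact Set.mem_insert _ _
    have hxB : x ∈ B := Set.mem_insert _ _
    have hyB : y ∉ B := by
      rintro (h | ⟨T, ⟨hTM, hTx⟩, hyT⟩)
      · exact hxy h.symm
      · exact hTx ((hnone T hTM).mpr hyT)
    have h1 : (B ∩ {x, y}).ncard = 1 := by
      rw [pair_ncard_one_iff hxy]; exact Or.inl ⟨hxB, hyB⟩
    have : B ∈ ({S : Set X | (S ∩ {x, y}).ncard = 1} ∩ M) := ⟨h1, hBM⟩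
    rw [hemp] at this; exact this
  · intro S₀ hS₀ hcut
    rw [Set.mem_setOf_eq, pair_ncard_one_iff hxy] at hS₀
    rcases hS₀ with ⟨hx, hy⟩ | ⟨hy, hx⟩
    · obtain ⟨M, hM, hM'⟩ := part2_aux x y hxy S₀ hx hy
      obtain ⟨S, ⟨hS1, hS2⟩, hSM⟩ := hcut M hM
      exact hS2 (hM' S hSM hS1)
    · obtain ⟨M, hM, hM'⟩ := part2_aux y x hxy.symm S₀ hy hx
      obtain ⟨S, ⟨hS1, hS2⟩, hSM⟩ := hcut M hM
      refine hS2 (hM' S hSM ?_)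
      rwa [Set.pair_comm y x]
end
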